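/- arXiv:2301.08666 — 3 statements merged into one kernel-verified Lean document; each statement's English description precedes it below -/
import Mathlib

section
/- A binary relation ≽ on A^N satisfies weak order, symmetry, separability, sufficientarian judgment, and monotonicity if and only if it is monotone-sufficientarian, i.e., sufficientarian with a sufficient set S that is upper-comprehensive (a ∈ S and b ≥ a imply b ∈ S). -/
open Function

section Defs

variable {N A : Type*}

/-- Weak order: complete and transitive. -/
def WeakOrderRel (R : (N → A) → (N → A) → Prop) : Prop :=
  (∀ x y, R x y ∨ R y x) ∧ ∀ x y z, R x y → R y z → R x z

/-- The strict part of a relation. -/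
def StrictRel (R : (N → A) → (N → A) → Prop) (x y : N → A) : Prop :=
  R x y ∧ ¬ R y x

/-- Symmetry: any allocation is socially indifferent to any permutation of it. -/
def SymmetryAx (R : (N → A) → (N → A) → Prop) : Prop :=
  ∀ (σ : Equiv.Perm N) (x : N → A), R x (x ∘ σ) ∧ R (x ∘ σ) x

open Classical in
/-- `splice M x y` agrees with `x` on `M` and with `y` off `M`. -/
noncomputable def splice (M : Set N) (x y : N → A) : N → A :=
  fun i => if i ∈ M then x i else y i

/-- Separability. -/
def SeparabilityAx (R : (N → A) → (N → A) → Prop) : Prop :=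
  ∀ (M : Set N) (x y x' y' : N → A),
    (R (splice M x y) (splice M x' y) ↔ R (splice M x y') (splice M x' y'))

open Classical in
/-- `alloc i a b` gives `a` to agent `i` and `b` to everyone else. -/
noncomputable def alloc (i : N) (a b : A) : N → A :=
  Function.update (fun _ => b) i a

open Classical in
/-- `alloc2 i j a c b` gives `a` to `i`, `c` to `j`, and `b` to the rest. -/
noncomputable def alloc2 (i j : N) (a c b : A) : N → A :=
  Function.update (alloc i a b) j c

/-- Sufficientarian judgment. -/
def SuffJudgment (R : (N → A) → (N → A) → Prop) : Prop :=
  ∀ (a b c : A) (i j : N), i ≠ j →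
    StrictRel R (fun _ => b) (alloc i a b) →
    R (alloc i a b) (alloc2 i j a c b)

/-- Weak sufficientarian judgment. -/
def WeakSuffJudgment (R : (N → A) → (N → A) → Prop) : Prop :=
  ∀ (a b c : A) (i j : N), i ≠ j →
    StrictRel R (fun _ => b) (alloc i a b) →
    StrictRel R (fun _ => b) (alloc2 i j a c b)

/-- Sufficientarianism: comparisons count agents whose consumption is in a sufficient set. -/
def IsSufficientarian [Fintype N] (R : (N → A) → (N → A) → Prop) : Prop :=
  ∃ S : Set A, ∀ x y : N → A,
    R x y ↔ Nat.card {i : N // x i ∈ S} ≥ Nat.card {i : N // y i ∈ S}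

end Defs

/-- Monotonicity: pointwise domination implies social weak preference. -/
def MonotonicityAx {N A : Type*} [Preorder A] (R : (N → A) → (N → A) → Prop) : Prop :=
  ∀ x y : N → A, (∀ i, y i ≤ x i) → R x y

/-- Monotone-sufficientarianism: sufficientarian with an upper-comprehensive sufficient set. -/
def IsMonotoneSufficientarian {N A : Type*} [Fintype N] [Preorder A]
    (R : (N → A) → (N → A) → Prop) : Prop :=
  ∃ S : Set A, (∀ a ∈ S, ∀ b : A, a ≤ b → b ∈ S) ∧
    ∀ x y : N → A,
      R x y ↔ Nat.card {i : N // x i ∈ S} ≥ Nat.card {i : N // y i ∈ S}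

/-! Fix an agent `i₀` and say `a` is at least as good as `c` when giving `a` to `i₀`, everyone
else holding `c`, is weakly better than the constant allocation `c`; separability and symmetry
turn every one-coordinate comparison into this one. Let `S` be the set of consumptions strictly
better than something. Sufficientarian judgment, applied at a second agent, shows that every
element of `S` is at least as good as everything, so the individual comparison is the two-class
order `c ∈ S → a ∈ S`. Changing coordinates one at a time and permuting agents then shows that
`x ≽ y` exactly when `x` has at least as many agents in `S`, and monotonicity makes `S` an upper
set. The converse is a counting argument. -/

open Classical Finset Equiv

lemma exists_perm_forall_mem {N : Type*} {s t : Finset N} (h : #s ≤ #t) :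
    ∃ σ : Perm N, ∀ i ∈ s, σ i ∈ t := by
  obtain ⟨t', ht', hcard⟩ := exists_subset_card_eq h
  obtain ⟨σ, hσ⟩ := Perm.exists_map_finset_eq s t' hcard.symm
  exact ⟨σ, fun i hi => ht' (hσ ▸ mem_map_of_mem _ hi)⟩

section Count

variable {N A : Type*} [Fintype N] {S : Set A} {x y : N → A}

noncomputable def suffCount (S : Set A) (x : N → A) : ℕ := #{i | x i ∈ S}

lemma natCard_eq_suffCount (S : Set A) (x : N → A) :
    Nat.card {i // x i ∈ S} = suffCount S x := by
  rw [Nat.card_eq_fintype_card, Fintype.card_subtype, suffCount]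

lemma suffCount_le_suffCount (h : ∀ i, y i ∈ S → x i ∈ S) : suffCount S y ≤ suffCount S x :=
  card_le_card (monotone_filter_right _ fun i _ => h i)

lemma suffCount_comp_perm (σ : Perm N) : suffCount S (x ∘ σ) = suffCount S x := by
  rw [← natCard_eq_suffCount, ← natCard_eq_suffCount]
  exact Nat.card_congr (σ.subtypeEquiv fun _ => Iff.rfl)

lemma suffCount_splice (M : Set N) (x y : N → A) :
    suffCount S (splice M x y) = #{i | i ∈ M ∧ x i ∈ S} + #{i | i ∉ M ∧ y i ∈ S} := by
  rw [suffCount, ← card_union_of_disjoint (disjoint_filter.2 fun _ _ h h' => h'.1 h.1),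
    ← filter_or]
  congr 1
  ext i
  simp only [mem_filter, mem_univ, true_and]
  by_cases hi : i ∈ M <;> simp [splice, hi]

lemma suffCount_update {k : N} {a : A} (hk : x k ∉ S) (ha : a ∈ S) :
    suffCount S (update x k a) = suffCount S x + 1 := by
  have : univ.filter (fun i => update x k a i ∈ S) = insert k (univ.filter fun i => x i ∈ S) := by
    ext i
    by_cases hi : i = k <;> simp [hi, ha]
  rw [suffCount, this, card_insert_of_notMem (by simpa using hk), suffCount]

lemma mem_of_suffCount_lt_suffCount_const {b : A} {z : N → A}
    (h : suffCount S z < suffCount S fun _ : N => b) : b ∈ S := by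
  by_contra hb
  simp [suffCount, hb] at h

end Count

section Backward

variable {N A : Type*} [Fintype N] [Preorder A] {R : (N → A) → (N → A) → Prop}

theorem axioms_of_monotoneSufficientarian (h : IsMonotoneSufficientarian R) :
    WeakOrderRel R ∧ SymmetryAx R ∧ SeparabilityAx R ∧ SuffJudgment R ∧ MonotonicityAx R := by
  obtain ⟨S, hS, hR⟩ := h
  replace hR : ∀ x y, R x y ↔ suffCount S y ≤ suffCount S x := by
    simpa only [natCard_eq_suffCount] using hR
  refine ⟨⟨fun x y => ?_, fun x y z hxy hyz => ?_⟩, fun σ x => ?_, fun M x y x' y' => ?_,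
    fun a b c i j hij hb => ?_, fun x y hxy => ?_⟩
  · simp only [hR]; exact le_total _ _
  · rw [hR] at *; exact hyz.trans hxy
  · simp only [hR, suffCount_comp_perm, le_refl, and_self]
  · simp only [hR, suffCount_splice]; omega
  · have hbS : b ∈ S :=
      mem_of_suffCount_lt_suffCount_const (not_le.1 (by simpa only [hR] using hb.2))
    refine (hR _ _).2 (suffCount_le_suffCount fun k hk => ?_)
    by_cases hkj : k = j
    · subst hkj; simpa [alloc, hij.symm] using hbS
    · simpa [alloc2, hkj] using hk
  · exact (hR _ _).2 (suffCount_le_suffCount fun i hi => hS _ hi _ (hxy i))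

end Backward

section Forward

variable {N A : Type*} {R : (N → A) → (N → A) → Prop}

lemma WeakOrderRel.refl (hW : WeakOrderRel R) (x : N → A) : R x x :=
  (hW.1 x x).elim id id

lemma WeakOrderRel.trans (hW : WeakOrderRel R) {x y z : N → A} : R x y → R y z → R x z :=
  hW.2 x y z

lemma WeakOrderRel.rel_of_forall_update (hW : WeakOrderRel R) [Fintype N] {x y : N → A}
    (h : ∀ i (z : N → A), R (update z i (x i)) (update z i (y i))) : R x y := by
  suffices ∀ s : Finset N, R x (s.piecewise y x) by simpa using this univ
  intro s
  induction s using Finset.induction with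
  | empty => simpa using hW.refl x
  | insert j s hj ih =>
    rw [piecewise_insert]
    refine hW.trans ih ?_
    have hstep := h j (s.piecewise y x)
    rwa [← piecewise_eq_of_notMem s y x hj, update_eq_self] at hstep

lemma rel_comp_perm_iff (hW : WeakOrderRel R) (hSym : SymmetryAx R) (σ : Perm N)
    (x y : N → A) : R (x ∘ σ) (y ∘ σ) ↔ R x y :=
  ⟨fun h => hW.trans (hSym σ x).1 (hW.trans h (hSym σ y).2),
    fun h => hW.trans (hSym σ x).2 (hW.trans h (hSym σ y).1)⟩

lemma splice_singleton (i : N) (x y : N → A) : splice {i} x y = update y i (x i) := by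
  ext k
  by_cases hk : k = i <;> simp [splice, hk]

lemma SeparabilityAx.rel_update_iff (hSep : SeparabilityAx R) (i : N) (a c : A)
    (y y' : N → A) :
    R (update y i a) (update y i c) ↔ R (update y' i a) (update y' i c) := by
  simpa [splice_singleton] using hSep {i} (fun _ => a) y (fun _ => c) y'

def agentPref (R : (N → A) → (N → A) → Prop) (i : N) (a c : A) : Prop :=
  R (alloc i a c) (fun _ => c)

lemma rel_update_iff_agentPref (hW : WeakOrderRel R) (hSym : SymmetryAx R)
    (hSep : SeparabilityAx R) (i₀ i : N) (y : N → A) (a c : A) :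
    R (update y i a) (update y i c) ↔ agentPref R i₀ a c := by
  rw [hSep.rel_update_iff i a c y (fun _ => c), update_eq_self_iff.2 rfl,
    ← rel_comp_perm_iff hW hSym (swap i₀ i), update_comp_equiv]
  simp [agentPref, alloc, comp_def]

def sufficientSet (R : (N → A) → (N → A) → Prop) (i₀ : N) : Set A :=
  {a | ∃ c, ¬ agentPref R i₀ c a}

lemma agentPref_total (hW : WeakOrderRel R) (hSym : SymmetryAx R) (hSep : SeparabilityAx R)
    (i₀ : N) (a c : A) : agentPref R i₀ a c ∨ agentPref R i₀ c a := by
  simpa only [rel_update_iff_agentPref hW hSym hSep i₀ i₀]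
    using hW.1 (update (fun _ => c) i₀ a) (update (fun _ => c) i₀ c)

lemma agentPref_trans (hW : WeakOrderRel R) (hSym : SymmetryAx R) (hSep : SeparabilityAx R)
    {i₀ : N} {a b c : A} (hab : agentPref R i₀ a b) (hbc : agentPref R i₀ b c) :
    agentPref R i₀ a c := by
  rw [← rel_update_iff_agentPref hW hSym hSep i₀ i₀ (fun _ => c)] at hab hbc ⊢
  exact hW.trans hab hbc

lemma agentPref_of_mem_sufficientSet (hW : WeakOrderRel R) (hSym : SymmetryAx R)
    (hSep : SeparabilityAx R) (hSJ : SuffJudgment R) {i₀ j₀ : N} (hij : i₀ ≠ j₀) {a : A}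
    (ha : a ∈ sufficientSet R i₀) (c : A) : agentPref R i₀ a c := by
  obtain ⟨d, hda⟩ := ha
  have had : R (fun _ => a) (alloc i₀ d a) := by
    have := (agentPref_total hW hSym hSep i₀ a d).resolve_right hda
    rwa [← rel_update_iff_agentPref hW hSym hSep i₀ i₀ (fun _ => a),
      update_eq_self_iff.2 rfl] at this
  have hj : alloc i₀ d a = update (alloc i₀ d a) j₀ a := by
    simp [alloc, hij.symm]
  have := hSJ d a c i₀ j₀ hij ⟨had, hda⟩
  rwa [alloc2, hj, update_idem, rel_update_iff_agentPref hW hSym hSep i₀] at this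

lemma agentPref_iff_mem_imp (hW : WeakOrderRel R) (hSym : SymmetryAx R) (hSep : SeparabilityAx R)
    (hSJ : SuffJudgment R) {i₀ j₀ : N} (hij : i₀ ≠ j₀) (a c : A) :
    agentPref R i₀ a c ↔ (c ∈ sufficientSet R i₀ → a ∈ sufficientSet R i₀) := by
  refine ⟨fun hac ⟨d, hdc⟩ => ⟨d, fun hda => hdc (agentPref_trans hW hSym hSep hda hac)⟩,
    fun h => ?_⟩
  by_cases ha : a ∈ sufficientSet R i₀
  · exact agentPref_of_mem_sufficientSet hW hSym hSep hSJ hij ha c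
  · by_contra hac
    exact ha (h ⟨a, hac⟩)

section

variable [Fintype N] {x y : N → A}

lemma rel_of_forall_mem_imp (hW : WeakOrderRel R) (hSym : SymmetryAx R)
    (hSep : SeparabilityAx R) (hSJ : SuffJudgment R) {i₀ j₀ : N} (hij : i₀ ≠ j₀)
    (h : ∀ i, y i ∈ sufficientSet R i₀ → x i ∈ sufficientSet R i₀) : R x y :=
  hW.rel_of_forall_update fun i z => (rel_update_iff_agentPref hW hSym hSep i₀ i z _ _).2
    ((agentPref_iff_mem_imp hW hSym hSep hSJ hij _ _).2 (h i))

lemma rel_of_suffCount_le (hW : WeakOrderRel R) (hSym : SymmetryAx R)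
    (hSep : SeparabilityAx R) (hSJ : SuffJudgment R) {i₀ j₀ : N} (hij : i₀ ≠ j₀)
    (h : suffCount (sufficientSet R i₀) y ≤ suffCount (sufficientSet R i₀) x) : R x y := by
  obtain ⟨σ, hσ⟩ := exists_perm_forall_mem h
  refine hW.trans (hSym σ x).1 (rel_of_forall_mem_imp hW hSym hSep hSJ hij fun i hi => ?_)
  simpa using hσ i (by simpa using hi)

lemma not_rel_of_suffCount_lt (hW : WeakOrderRel R) (hSym : SymmetryAx R)
    (hSep : SeparabilityAx R) (hSJ : SuffJudgment R) {i₀ j₀ : N} (hij : i₀ ≠ j₀)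
    (h : suffCount (sufficientSet R i₀) x < suffCount (sufficientSet R i₀) y) : ¬ R x y := by
  obtain ⟨k, hyk, hxk⟩ := exists_mem_notMem_of_card_lt_card h
  simp only [mem_filter, mem_univ, true_and] at hyk hxk
  have hyz : R y (update x k (y k)) :=
    rel_of_suffCount_le hW hSym hSep hSJ hij (by rw [suffCount_update hxk hyk]; omega)
  intro hxy
  have hxz : R (update x k (x k)) (update x k (y k)) := by
    rw [update_eq_self]
    exact hW.trans hxy hyz
  rw [rel_update_iff_agentPref hW hSym hSep i₀, agentPref_iff_mem_imp hW hSym hSep hSJ hij] at hxz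
  exact hxk (hxz hyk)

lemma rel_iff_suffCount_le (hW : WeakOrderRel R) (hSym : SymmetryAx R)
    (hSep : SeparabilityAx R) (hSJ : SuffJudgment R) {i₀ j₀ : N} (hij : i₀ ≠ j₀) (x y : N → A) :
    R x y ↔ suffCount (sufficientSet R i₀) y ≤ suffCount (sufficientSet R i₀) x :=
  ⟨fun hxy => not_lt.1 fun h => not_rel_of_suffCount_lt hW hSym hSep hSJ hij h hxy,
    rel_of_suffCount_le hW hSym hSep hSJ hij⟩

end

lemma isUpperSet_sufficientSet [Preorder A] (hW : WeakOrderRel R) (hSym : SymmetryAx R)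
    (hSep : SeparabilityAx R) (hSJ : SuffJudgment R) (hM : MonotonicityAx R) {i₀ j₀ : N}
    (hij : i₀ ≠ j₀) : IsUpperSet (sufficientSet R i₀) := fun a b hab ha => by
  have hba : agentPref R i₀ b a := hM _ _ fun i => by
    by_cases hi : i = i₀ <;> simp [alloc, hi, hab]
  exact (agentPref_iff_mem_imp hW hSym hSep hSJ hij b a).1 hba ha

theorem monotoneSufficientarian_of_axioms [Fintype N] [Preorder A] (hN : 2 ≤ Fintype.card N)
    (hW : WeakOrderRel R) (hSym : SymmetryAx R) (hSep : SeparabilityAx R) (hSJ : SuffJudgment R)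
    (hM : MonotonicityAx R) : IsMonotoneSufficientarian R := by
  obtain ⟨i₀, j₀, hij⟩ := Fintype.exists_pair_of_one_lt_card hN
  refine ⟨sufficientSet R i₀,
    fun a ha b hab => isUpperSet_sufficientSet hW hSym hSep hSJ hM hij hab ha, fun x y => ?_⟩
  rw [natCard_eq_suffCount, natCard_eq_suffCount]
  exact rel_iff_suffCount_le hW hSym hSep hSJ hij x y

end Forward

theorem stmt3_general {N A : Type*} [Fintype N] (hN : 2 ≤ Fintype.card N) [Preorder A]
    (R : (N → A) → (N → A) → Prop) :
    (WeakOrderRel R ∧ SymmetryAx R ∧ SeparabilityAx R ∧ SuffJudgment R ∧ MonotonicityAx R)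
      ↔ IsMonotoneSufficientarian R :=
  ⟨fun ⟨hW, hSym, hSep, hSJ, hM⟩ => monotoneSufficientarian_of_axioms hN hW hSym hSep hSJ hM,
    axioms_of_monotoneSufficientarian⟩

/-- weak order, symmetry, separability, sufficientarian judgment and
monotonicity characterize monotone-sufficientarianism. -/
theorem stmt3 {N A : Type*} [Fintype N] (hN : 2 ≤ Fintype.card N) [Preorder A] [Nonempty A]
    (R : (N → A) → (N → A) → Prop) :
    (WeakOrderRel R ∧ SymmetryAx R ∧ SeparabilityAx R ∧ SuffJudgment R ∧ MonotonicityAx R)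
      ↔ IsMonotoneSufficientarian R :=
  stmt3_general hN R
end

section
/- Let A be any set with at least 3 elements, u : A → ℝ a function whose image contains at least three distinct values, and |N| ≥ 2. The binary relation on A^N defined by x ≽ y iff Σ_i u(x_i) ≥ Σ_i u(y_i) is a weak order satisfying symmetry and separability but violates sufficientarian judgment. -/
/-!
The utilitarian sum is a welfare function into a linear order, so it induces a weak order; it is invariant
under permutations of the agents and additively separable across any coalition. With utility
levels `u a < u b < u c`, moving one agent from `b` down to `a` makes the allocation strictly worse
than everyone at `b`, but then moving a second agent from `b` up to `c` strictly improves on it,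
which sufficientarian judgment forbids.
-/

open Function

lemma exists_lt_lt_of_ne {α β : Type*} [LinearOrder β] {u : α → β} {a b c : α}
    (hab : u a ≠ u b) (hac : u a ≠ u c) (hbc : u b ≠ u c) : ∃ x y z, u x < u y ∧ u y < u z := by
  rcases hab.lt_or_gt with h₁ | h₁ <;> rcases hac.lt_or_gt with h₂ | h₂ <;>
    rcases hbc.lt_or_gt with h₃ | h₃ <;>
    first
    | exact ⟨_, _, _, h₁, h₂⟩ | exact ⟨_, _, _, h₂, h₁⟩ | exact ⟨_, _, _, h₁, h₃⟩
    | exact ⟨_, _, _, h₃, h₁⟩ | exact ⟨_, _, _, h₂, h₃⟩ | exact ⟨_, _, _, h₃, h₂⟩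

section Utilitarian

variable {N A β : Type*} [Fintype N] [AddCommMonoid β]

open Classical in
lemma sum_splice (u : A → β) (M : Set N) (x y : N → A) :
    ∑ i, u (splice M x y i) =
      ∑ i ∈ Finset.univ.filter (· ∈ M), u (x i) + ∑ i ∈ Finset.univ.filter (· ∉ M), u (y i) := by
  simp only [splice, apply_ite u]
  exact Finset.sum_ite ..

variable [LinearOrder β]

def utilitarianRel (u : A → β) (x y : N → A) : Prop :=
  ∑ i, u (x i) ≥ ∑ i, u (y i)

lemma weakOrderRel_utilitarianRel (u : A → β) : WeakOrderRel (utilitarianRel (N := N) u) :=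
  ⟨fun _ _ => le_total _ _, fun _ _ _ hxy hyz => hyz.trans hxy⟩

lemma symmetryAx_utilitarianRel (u : A → β) : SymmetryAx (utilitarianRel (N := N) u) := by
  intro σ x
  have h : ∑ i, u ((x ∘ σ) i) = ∑ i, u (x i) := Equiv.sum_comp σ (fun i => u (x i))
  exact ⟨h.le, h.ge⟩

lemma strictRel_utilitarianRel_iff (u : A → β) (x y : N → A) :
    StrictRel (utilitarianRel u) x y ↔ ∑ i, u (y i) < ∑ i, u (x i) := by
  simp only [StrictRel, utilitarianRel, ge_iff_le, not_le]
  exact ⟨fun h => h.2, fun h => ⟨h.le, h⟩⟩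

variable [IsOrderedCancelAddMonoid β]

lemma separabilityAx_utilitarianRel (u : A → β) : SeparabilityAx (utilitarianRel (N := N) u) := by
  intro M x y x' y'
  simp only [utilitarianRel, ge_iff_le, sum_splice, add_le_add_iff_right]

lemma sum_comp_update_lt_sum_comp_update [DecidableEq N] {u : A → β} (x : N → A) (i : N)
    {p q : A} (h : u p < u q) :
    ∑ k, u (Function.update x i p k) < ∑ k, u (Function.update x i q k) := by
  have h_compl : ∀ k ∈ ({i}ᶜ : Finset N),
      u (Function.update x i p k) = u (Function.update x i q k) := fun k hk => by
    rw [Function.update_of_ne (by simpa using hk), Function.update_of_ne (by simpa using hk)]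
  rw [Fintype.sum_eq_add_sum_compl i, Fintype.sum_eq_add_sum_compl i (fun k => u _),
    Finset.sum_congr rfl h_compl, Function.update_self, Function.update_self]
  exact add_lt_add_left h _

lemma not_suffJudgment_utilitarianRel [Nontrivial N] {u : A → β} {a b c : A}
    (hab : u a < u b) (hbc : u b < u c) : ¬ SuffJudgment (utilitarianRel (N := N) u) := by
  classical
  obtain ⟨i, j, hij⟩ := exists_pair_ne N
  have hb : StrictRel (utilitarianRel u) (fun _ => b) (alloc i a b) := by
    have h := sum_comp_update_lt_sum_comp_update (fun _ : N => b) i hab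
    rw [Function.update_eq_self i (fun _ : N => b)] at h
    exact (strictRel_utilitarianRel_iff ..).2 h
  have hj : alloc i a b j = b := Function.update_of_ne hij.symm _ _
  have hc : StrictRel (utilitarianRel u) (alloc2 i j a c b) (alloc i a b) := by
    have h := sum_comp_update_lt_sum_comp_update (alloc i a b) j (q := c) (hj ▸ hbc)
    rw [Function.update_eq_self] at h
    exact (strictRel_utilitarianRel_iff ..).2 h
  exact fun hsuff => hc.2 (hsuff a b c i j hij hb)

end Utilitarian

/-- the additive (utilitarian) rule with a utility taking at least three
distinct values is a weak order satisfying symmetry and separability, but violates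
sufficientarian judgment. -/
theorem stmt16 {N A : Type*} [Fintype N] (hN : 2 ≤ Fintype.card N)
    (u : A → ℝ) (hu : ∃ a b c : A, u a ≠ u b ∧ u a ≠ u c ∧ u b ≠ u c) :
    let R : (N → A) → (N → A) → Prop := fun x y => ∑ i, u (x i) ≥ ∑ i, u (y i)
    WeakOrderRel R ∧ SymmetryAx R ∧ SeparabilityAx R ∧ ¬ SuffJudgment R := by
  obtain ⟨a, b, c, hab, hac, hbc⟩ := hu
  obtain ⟨x, y, z, hxy, hyz⟩ := exists_lt_lt_of_ne hab hac hbc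
  have : Nontrivial N := Fintype.one_lt_card_iff_nontrivial.mp hN
  exact ⟨weakOrderRel_utilitarianRel u, symmetryAx_utilitarianRel u,
    separabilityAx_utilitarianRel u, not_suffJudgment_utilitarianRel hxy hyz⟩
end

section
/- Let A = [0,1] and N finite with |N| ≥ 2. The binary relation x ≽ y iff min_i x_i ≥ min_i y_i is a weak order satisfying symmetry, monotonicity, and sufficientarian judgment, but it violates separability (when |N| ≥ 2). -/
open Function

/-! The maximin order only sees the worst-off level, which permutations do not change and
pointwise increases do not lower. If `b ≻ alloc i a b` then `a < b`, so the worst-off level of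
`alloc i a b` is `a`, and it cannot rise when agent `j` is given something else. Separability
fails because a low common level outside `M` masks differences on `M`: for `a < b`, agent `i`
at `a` is strictly worse than at `b` when everyone else has `b`, but indifferent when everyone
else has `a`. -/

section Alloc

variable {N A : Type*}

theorem alloc_self (i : N) (a b : A) : alloc i a b i = a := by
  simp [alloc]

theorem alloc_ne {i k : N} (h : k ≠ i) (a b : A) : alloc i a b k = b := by
  simp [alloc, h]

theorem alloc2_fst {i j : N} (h : i ≠ j) (a c b : A) : alloc2 i j a c b i = a := by
  simp [alloc2, h, alloc_self]

theorem splice_singleton_const (i : N) (a b : A) :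
    splice {i} (fun _ => a) (fun _ => b) = alloc i a b := by
  ext k
  by_cases hk : k = i <;> simp [splice, alloc, hk]

end Alloc

section Maximin

variable {N A : Type*} [Fintype N] [Nonempty N] [LinearOrder A]

def maximinRel (x y : N → A) : Prop :=
  Finset.univ.inf' Finset.univ_nonempty y ≤ Finset.univ.inf' Finset.univ_nonempty x

theorem Finset.inf'_univ_comp_perm (σ : Equiv.Perm N) (x : N → A) :
    Finset.univ.inf' Finset.univ_nonempty (x ∘ σ) = Finset.univ.inf' Finset.univ_nonempty x := by
  classical
  rw [Finset.inf'_comp_eq_image Finset.univ_nonempty x]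
  simp only [Finset.image_univ_equiv]

theorem inf'_alloc [Nontrivial N] (i : N) (a b : A) :
    Finset.univ.inf' Finset.univ_nonempty (alloc i a b) = min a b := by
  obtain ⟨k, hki⟩ := exists_ne i
  apply le_antisymm
  · exact le_min (Finset.inf'_le_of_le _ (Finset.mem_univ i) (alloc_self i a b).le)
      (Finset.inf'_le_of_le _ (Finset.mem_univ k) (alloc_ne hki a b).le)
  · refine Finset.le_inf' _ _ fun k _ => ?_
    rcases eq_or_ne k i with rfl | hki
    · rw [alloc_self]; exact min_le_left a b
    · rw [alloc_ne hki]; exact min_le_right a b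

theorem weakOrderRel_maximinRel : WeakOrderRel (maximinRel (N := N) (A := A)) :=
  ⟨fun _ _ => le_total _ _, fun _ _ _ hxy hyz => hyz.trans hxy⟩

theorem symmetryAx_maximinRel : SymmetryAx (maximinRel (N := N) (A := A)) := fun σ x =>
  ⟨(Finset.inf'_univ_comp_perm σ x).le, (Finset.inf'_univ_comp_perm σ x).ge⟩

theorem maximinRel_of_le {x y : N → A} (h : ∀ i, y i ≤ x i) : maximinRel x y :=
  Finset.inf'_mono_fun fun i _ => h i

theorem suffJudgment_maximinRel [Nontrivial N] : SuffJudgment (maximinRel (N := N) (A := A)) := by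
  intro a b c i j hij ⟨_, hnot⟩
  have hab : a ≤ b := by
    by_contra! hba
    exact hnot (by
      simp only [maximinRel, inf'_alloc, Finset.inf'_const, min_eq_right hba.le, le_refl])
  calc Finset.univ.inf' Finset.univ_nonempty (alloc2 i j a c b) ≤ a :=
        Finset.inf'_le_of_le _ (Finset.mem_univ i) (alloc2_fst hij a c b).le
    _ = Finset.univ.inf' Finset.univ_nonempty (alloc i a b) := by
        rw [inf'_alloc, min_eq_left hab]

theorem not_separabilityAx_maximinRel [Nontrivial N] {a b : A} (hab : a < b) :
    ¬ SeparabilityAx (maximinRel (N := N) (A := A)) := by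
  obtain ⟨i⟩ := ‹Nonempty N›
  intro hsep
  have h := hsep {i} (fun _ => a) (fun _ => b) (fun _ => b) (fun _ => a)
  simp only [splice_singleton_const, maximinRel, inf'_alloc, min_self] at h
  exact hab.not_ge ((h.mpr (min_le_right b a)).trans (min_le_left a b))

end Maximin

/-- on `A = [0,1]`, the maximin rule `x ≽ y ↔ min_i x_i ≥ min_i y_i` is a
weak order satisfying symmetry, monotonicity, and sufficientarian judgment, but violates
separability. -/
theorem stmt17 {N : Type*} [Fintype N] [Nontrivial N] :
    let A := Set.Icc (0 : ℝ) 1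
    let R : (N → A) → (N → A) → Prop := fun x y =>
      Finset.univ.inf' Finset.univ_nonempty y ≤ Finset.univ.inf' Finset.univ_nonempty x
    WeakOrderRel R ∧ SymmetryAx R ∧ (∀ x y : N → A, (∀ i, y i ≤ x i) → R x y) ∧
      SuffJudgment R ∧ ¬ SeparabilityAx R := by
  intro A R
  exact ⟨weakOrderRel_maximinRel, symmetryAx_maximinRel, fun _ _ => maximinRel_of_le,
    suffJudgment_maximinRel, not_separabilityAx_maximinRel (zero_lt_one : (0 : A) < 1)⟩
end
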